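/- arXiv:2603.10733 — 4 statements merged into one kernel-verified Lean document; each statement's English description precedes it below -/
import Mathlib

section
/- The set C_f^∞ of f-smooth words over a binary alphabet {a,b} is left- and right-extendable: for every u ∈ C_f^∞ there exist letters c, d ∈ {a,b} with cu ∈ C_f^∞ and ud ∈ C_f^∞. -/
/-!
Left extendability is proved by induction on the length. Write `u = c^k v` with `v` not starting
with `c`, and let `d` be the other letter. As `D_f` only sees exponents and `a ≥ 1`, `D_f(d u)`
keeps `k` as an inner exponent, while `D_f(c u)` replaces the boundary cut of `k` by that of
`k + 1`. If `v = ε` or `k = b`, then `D_f(d u) = D_f(u)`; if `k ∉ {a, b}`, then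
`D_f(c u) = D_f(u)`; if `k = a`, then `D_f(d u) = a D_f(u)` and `D_f(c u) = b D_f(u)`, so a left
extension of the shorter word `D_f(u)` decides which letter to prepend. Right extendability
follows since `D_f` commutes with reversal.
-/

namespace SmoothWords

/-- Complement of a letter over the alphabet `{a, b}`. -/
def flip (a b c : ℕ) : ℕ := if c = a then b else a

/-- Run-length encoding of a finite word: list of (letter, exponent) pairs. -/
def runs : List ℕ → List (ℕ × ℕ)
  | [] => []
  | c :: t =>
    match runs t with
    | [] => [(c, 1)]
    | (d, k) :: r => if c = d then (c, k + 1) :: r else (c, 1) :: (d, k) :: r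

/-- The exponents of the canonical run-length factorization. -/
def exps (u : List ℕ) : List ℕ := (runs u).map Prod.snd

/-- Boundary cut used by the finite derivatives. -/
def cut (a b p : ℕ) : List ℕ := if p ≤ a then [] else [b]

/-- The finite derivative `D_f`. -/
def Df (a b : ℕ) (u : List ℕ) : List ℕ :=
  match exps u with
  | [] => []
  | [p] => cut a b p
  | p :: q :: rest =>
      cut a b p ++ (q :: rest).dropLast ++ cut a b ((q :: rest).getLast (List.cons_ne_nil _ _))

/-- `u` is f-derivable: letters in `{a,b}`, inner run exponents in `{a,b}`,
boundary run exponents in `[1, b]`. -/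
def Cf1 (a b : ℕ) (u : List ℕ) : Prop :=
  (∀ c ∈ u, c = a ∨ c = b) ∧
  (∀ p ∈ exps u, p ≤ b) ∧
  (∀ p ∈ ((exps u).drop 1).dropLast, p = a ∨ p = b)

/-- `u` is f-smooth: all iterated finite derivatives are f-derivable
(equivalently, some iterate is `ε`). -/
def FSmooth (a b : ℕ) (u : List ℕ) : Prop := ∀ n, Cf1 a b ((Df a b)^[n] u)

/-- The r-derivative `D_r`: keeps all exponents but cuts the last one. -/
def Dr (a b : ℕ) (u : List ℕ) : List ℕ :=
  match exps u with
  | [] => []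
  | p :: rest =>
      (p :: rest).dropLast ++ cut a b ((p :: rest).getLast (List.cons_ne_nil _ _))

/-- `u` is r-derivable. -/
def Cr1 (a b : ℕ) (u : List ℕ) : Prop :=
  (∀ c ∈ u, c = a ∨ c = b) ∧
  (∀ p ∈ exps u, p ≤ b) ∧
  (∀ p ∈ (exps u).dropLast, p = a ∨ p = b)

/-- `u` is r-smooth. -/
def RSmooth (a b : ℕ) (u : List ℕ) : Prop := ∀ n, Cr1 a b ((Dr a b)^[n] u)

/-- `y` is the derivative of the infinite word `x`: `x = x₀^{y₀} x̄₀^{y₁} x₀^{y₂} ⋯`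
with all `y i ∈ {a, b}` (in particular `x` is derivable). -/
def DerivesTo (a b : ℕ) (x y : ℕ → ℕ) : Prop :=
  (∀ i, y i = a ∨ y i = b) ∧
  ∃ S : ℕ → ℕ, S 0 = 0 ∧ (∀ k, S (k + 1) = S k + y k) ∧
    ∀ k i, S k ≤ i → i < S (k + 1) → x i = (flip a b)^[k] (x 0)

/-- An infinite word over `{a,b}` is smooth if it is infinitely derivable. -/
def Smooth (a b : ℕ) (x : ℕ → ℕ) : Prop :=
  (∀ i, x i = a ∨ x i = b) ∧
  ∃ X : ℕ → ℕ → ℕ, X 0 = x ∧ ∀ n, DerivesTo a b (X n) (X (n + 1))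

/-- Auxiliary for the f-primitives: alternate blocks with given exponents,
ending with a block of exponent `a`. -/
def pfAux (a b : ℕ) : ℕ → List ℕ → List ℕ
  | c, [] => List.replicate a c
  | c, p :: t => List.replicate p c ++ pfAux a b (flip a b c) t

/-- The f-primitive `P_{f,c}`. -/
def Pf (a b c : ℕ) (u : List ℕ) : List ℕ :=
  if c = a then List.replicate a a ++ pfAux a b b u
  else (List.replicate a a ++ pfAux a b b u).map (flip a b)

/-- `u` is a bispecial f-smooth word. -/
def Bispecial (a b : ℕ) (u : List ℕ) : Prop :=
  FSmooth a b u ∧ FSmooth a b (a :: u) ∧ FSmooth a b (b :: u) ∧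
    FSmooth a b (u ++ [a]) ∧ FSmooth a b (u ++ [b])

open Classical in
/-- The multiplicity `m(u) = |{aua,aub,bua,bub} ∩ C_f^∞| - 3`. -/
noncomputable def mult (a b : ℕ) (u : List ℕ) : ℤ :=
  (if FSmooth a b (a :: u ++ [a]) then 1 else 0) +
  (if FSmooth a b (a :: u ++ [b]) then 1 else 0) +
  (if FSmooth a b (b :: u ++ [a]) then 1 else 0) +
  (if FSmooth a b (b :: u ++ [b]) then 1 else 0) - 3

/-- The vertex of the tree `T` indexed by the path `s` from the root `ε`
(`false` = child by `P_{f,a}`, `true` = child by `P_{f,b}`). -/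
def node (a b : ℕ) : List Bool → List ℕ
  | [] => []
  | c :: s => Pf a b (if c then b else a) (node a b s)

/-- Total length `f(i) = ∑_{u ∈ T_i} |u|` of generation `i` of `T`. -/
def totalLen (a b i : ℕ) : ℕ :=
  ∑ s : Fin i → Bool, (node a b (List.ofFn s)).length

/-- Generation `i` of the tree `T`, as a finite set of words. -/
def genSet (a b i : ℕ) : Finset (List ℕ) :=
  (Finset.univ : Finset (Fin i → Bool)).image fun s => node a b (List.ofFn s)

/-- `b_i(n) = |T_i ∩ A^n|`. -/
def bfun (a b i n : ℕ) : ℕ := ((genSet a b i).filter fun u => u.length = n).card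

/-- `s_i(n) = ∑_{m<n} b_i(m)`. -/
def sfun (a b i n : ℕ) : ℕ := ∑ m ∈ Finset.range n, bfun a b i m

/-- `p_i(n) = ∑_{m<n} s_i(m)`. -/
def pfun (a b i n : ℕ) : ℕ := ∑ m ∈ Finset.range n, sfun a b i m

/-- `p(n) = ∑_i p_i(n)`. -/
noncomputable def pTot (a b n : ℕ) : ℝ := ∑' i : ℕ, (pfun a b i n : ℝ)

/-- `l_i`, the minimal length of a word of generation `i` of `T`. -/
noncomputable def li (a b i : ℕ) : ℕ :=
  sInf {m | ∃ s : Fin i → Bool, (node a b (List.ofFn s)).length = m}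

/-- `u` is a factor of the infinite word `x`. -/
def FactorOf (u : List ℕ) (x : ℕ → ℕ) : Prop :=
  ∃ i, u = (List.range u.length).map fun j => x (i + j)

lemma exists_runs_cons (c : ℕ) (t : List ℕ) : ∃ k r, runs (c :: t) = (c, k) :: r := by
  rcases h : runs t with _ | ⟨⟨d, k⟩, r⟩
  · exact ⟨1, [], by simp [runs, h]⟩
  · by_cases hcd : c = d
    · exact ⟨k + 1, r, by simp [runs, h, hcd]⟩
    · exact ⟨1, (d, k) :: r, by simp [runs, h, hcd]⟩

lemma runs_cons_cons_of_ne {c d : ℕ} (t : List ℕ) (hdc : d ≠ c) :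
    runs (d :: c :: t) = (d, 1) :: runs (c :: t) := by
  obtain ⟨k, r, h⟩ := exists_runs_cons c t
  rw [runs.eq_2, h]
  simp [hdc]

lemma exps_cons_cons_of_ne {c d : ℕ} (t : List ℕ) (hdc : d ≠ c) :
    exps (d :: c :: t) = 1 :: exps (c :: t) := by
  simp [exps, runs_cons_cons_of_ne t hdc]

lemma exps_cons_cons_self {c k : ℕ} {t l : List ℕ} (h : exps (c :: t) = k :: l) :
    exps (c :: c :: t) = (k + 1) :: l := by
  obtain ⟨k', r, hr⟩ := exists_runs_cons c t
  simp only [exps, hr, List.map_cons, List.cons.injEq] at h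
  simp [exps, runs.eq_2 c (c :: t), hr, ← h.1, ← h.2]

lemma exps_ne_nil (c : ℕ) (t : List ℕ) : exps (c :: t) ≠ [] := by
  obtain ⟨k, r, h⟩ := exists_runs_cons c t
  simp [exps, h]

lemma exps_cons_cases (c : ℕ) (t : List ℕ) :
    exps (c :: t) = 1 :: exps t ∨ ∃ k l, exps t = k :: l ∧ exps (c :: t) = (k + 1) :: l := by
  rcases t with _ | ⟨c', t⟩
  · exact Or.inl rfl
  by_cases hcc : c = c'
  · subst hcc
    obtain ⟨k, l, h⟩ := List.exists_cons_of_ne_nil (exps_ne_nil c t)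
    exact Or.inr ⟨k, l, h, exps_cons_cons_self h⟩
  · exact Or.inl (exps_cons_cons_of_ne t hcc)

lemma sum_exps (u : List ℕ) : (exps u).sum = u.length := by
  induction u with
  | nil => rfl
  | cons c t ih =>
    rcases exps_cons_cases c t with h | ⟨k, l, ht, h⟩
    · simp [h, ih, add_comm]
    · simp only [ht, List.sum_cons] at ih
      simp only [h, List.sum_cons, List.length_cons, ← ih]
      omega

lemma one_le_of_mem_exps {u : List ℕ} {p : ℕ} (hp : p ∈ exps u) : 1 ≤ p := by
  induction u with
  | nil => simp [exps, runs] at hp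
  | cons c t ih =>
    rcases exps_cons_cases c t with h | ⟨k, l, ht, h⟩
    · rw [h, List.mem_cons] at hp
      exact hp.elim (fun h => h.ge) ih
    · rw [h, List.mem_cons] at hp
      rcases hp with rfl | hp
      · omega
      · exact ih (by simp [ht, hp])

def snocRun (c : ℕ) : List (ℕ × ℕ) → List (ℕ × ℕ)
  | [] => [(c, 1)]
  | [(d, k)] => if d = c then [(d, k + 1)] else [(d, k), (c, 1)]
  | p :: q :: rest => p :: snocRun c (q :: rest)

lemma snocRun_append_singleton (c : ℕ) (xs : List (ℕ × ℕ)) (p : ℕ × ℕ) :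
    snocRun c (xs ++ [p]) = xs ++ snocRun c [p] := by
  induction xs with
  | nil => rfl
  | cons q xs ih =>
    rcases xs with _ | ⟨z, zs⟩
    · rfl
    · exact congrArg (q :: ·) ih

lemma runs_append_singleton (u : List ℕ) (c : ℕ) : runs (u ++ [c]) = snocRun c (runs u) := by
  induction u with
  | nil => rfl
  | cons d t ih =>
    rw [List.cons_append, runs.eq_2, ih, runs.eq_2]
    rcases runs t with _ | ⟨⟨e, k⟩, _ | ⟨q, r⟩⟩
    · by_cases d = c <;> simp_all [snocRun]
    · by_cases e = c <;> by_cases d = e <;> simp_all [snocRun]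
    · by_cases d = e <;> simp_all [snocRun]

lemma runs_reverse (u : List ℕ) : runs u.reverse = (runs u).reverse := by
  induction u with
  | nil => rfl
  | cons c t ih =>
    rw [List.reverse_cons, runs_append_singleton, ih, runs.eq_2]
    rcases runs t with _ | ⟨⟨d, k⟩, r⟩
    · rfl
    · rw [List.reverse_cons, snocRun_append_singleton]
      by_cases hcd : c = d
      · simp [snocRun, hcd]
      · simp [snocRun, hcd, Ne.symm hcd]

lemma exps_reverse (u : List ℕ) : exps u.reverse = (exps u).reverse := by
  rw [exps, exps, runs_reverse, List.map_reverse]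

section Derivative

variable (a b : ℕ)

/-- The r-derivative `D_r` read on exponent lists. -/
def cutLast : List ℕ → List ℕ
  | [] => []
  | [p] => cut a b p
  | p :: q :: rest => p :: cutLast (q :: rest)

def dfExps : List ℕ → List ℕ
  | [] => []
  | p :: l => cut a b p ++ cutLast a b l

lemma cutLast_append_singleton (l : List ℕ) (p : ℕ) :
    cutLast a b (l ++ [p]) = l ++ cut a b p := by
  induction l with
  | nil => rfl
  | cons q l ih =>
    rcases l with _ | ⟨r, l⟩
    · rfl
    · exact congrArg (q :: ·) ih

lemma cutLast_cons {l : List ℕ} (hl : l ≠ []) (p : ℕ) :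
    cutLast a b (p :: l) = p :: cutLast a b l := by
  obtain ⟨q, l, rfl⟩ := List.exists_cons_of_ne_nil hl
  rfl

lemma length_cutLast_le (l : List ℕ) : (cutLast a b l).length ≤ l.length := by
  rcases List.eq_nil_or_concat l with rfl | ⟨l, p, rfl⟩
  · rfl
  · rw [List.concat_eq_append, cutLast_append_singleton]
    unfold cut
    split <;> simp

lemma df_eq_dfExps (u : List ℕ) : Df a b u = dfExps a b (exps u) := by
  unfold Df
  split
  case h_1 h => rw [h]; rfl
  case h_2 h => rw [h]; simp [dfExps, cutLast]
  case h_3 p q rest h =>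
    rw [h, dfExps, List.append_assoc, ← cutLast_append_singleton, List.dropLast_append_getLast]

lemma df_of_exps_eq_cons {u : List ℕ} {k : ℕ} {l : List ℕ} (h : exps u = k :: l) :
    Df a b u = cut a b k ++ cutLast a b l := by
  rw [df_eq_dfExps, h, dfExps]

lemma reverse_cut (p : ℕ) : (cut a b p).reverse = cut a b p := by
  unfold cut; split <;> rfl

lemma dfExps_reverse (e : List ℕ) : dfExps a b e.reverse = (dfExps a b e).reverse := by
  rcases e with _ | ⟨p, l⟩
  · rfl
  rcases List.eq_nil_or_concat l with rfl | ⟨l, q, rfl⟩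
  · simp [dfExps, cutLast, reverse_cut]
  · simp [dfExps, cutLast_append_singleton, reverse_cut]

lemma df_reverse (u : List ℕ) : Df a b u.reverse = (Df a b u).reverse := by
  rw [df_eq_dfExps, df_eq_dfExps, exps_reverse, dfExps_reverse]

end Derivative

section Smooth

variable {a b : ℕ}

lemma cut_of_le {p : ℕ} (h : p ≤ a) : cut a b p = [] := if_pos h

lemma cut_of_lt {p : ℕ} (h : a < p) : cut a b p = [b] := if_neg (Nat.not_le.2 h)

lemma cut_succ_of_ne {p : ℕ} (h : p ≠ a) : cut a b (p + 1) = cut a b p := by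
  unfold cut
  split_ifs <;> first | rfl | omega

lemma fSmooth_iff {u : List ℕ} : FSmooth a b u ↔ Cf1 a b u ∧ FSmooth a b (Df a b u) :=
  ⟨fun h => ⟨h 0, fun n => h (n + 1)⟩, fun ⟨h₀, h⟩ n => n.casesOn h₀ h⟩

lemma fSmooth_nil : FSmooth a b [] := by
  intro n
  rw [Function.iterate_fixed (rfl : Df a b [] = []) n]
  exact ⟨by simp, by simp [exps, runs], by simp [exps, runs]⟩

lemma fSmooth_singleton (ha : 1 ≤ a) (hab : a < b) : FSmooth a b [a] := by
  have hexps : exps [a] = [1] := rfl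
  have hDf : Df a b [a] = [] := by rw [df_of_exps_eq_cons a b hexps, cut_of_le ha]; rfl
  refine fSmooth_iff.2 ⟨⟨by simp, ?_, by simp [hexps]⟩, by rw [hDf]; exact fSmooth_nil⟩
  simpa [hexps] using (by omega : 1 ≤ b)

lemma length_df_lt (ha : 1 ≤ a) {u : List ℕ} (hu : u ≠ []) :
    (Df a b u).length < u.length := by
  obtain ⟨c, t, rfl⟩ := List.exists_cons_of_ne_nil hu
  obtain ⟨k, l, h⟩ := List.exists_cons_of_ne_nil (exps_ne_nil c t)
  have hsum : k + l.sum = (c :: t).length := by rw [← sum_exps, h, List.sum_cons]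
  have hk : 1 ≤ k := one_le_of_mem_exps (h ▸ List.mem_cons_self)
  have hcut : (cut a b k).length < k := by unfold cut; split <;> simp <;> omega
  have hl : l.length ≤ l.sum :=
    List.length_le_sum_of_one_le l fun p hp => one_le_of_mem_exps (h ▸ List.mem_cons_of_mem k hp)
  have := length_cutLast_le a b l
  rw [df_of_exps_eq_cons a b h, List.length_append]
  omega

lemma Cf1.reverse {u : List ℕ} (h : Cf1 a b u) : Cf1 a b u.reverse := by
  obtain ⟨hletters, hle, hinner⟩ := h
  refine ⟨fun c hc => hletters c (List.mem_reverse.1 hc), fun p hp => hle p ?_,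
    fun p hp => hinner p ?_⟩
  · simpa [exps_reverse] using hp
  · simpa [exps_reverse, List.drop_one, List.tail_reverse, List.dropLast_reverse,
      List.tail_dropLast] using hp

lemma FSmooth.reverse {u : List ℕ} (h : FSmooth a b u) : FSmooth a b u.reverse := by
  intro n
  have hiter : ((Df a b)^[n] u).reverse = (Df a b)^[n] u.reverse :=
    Function.Semiconj.iterate_right (f := List.reverse) (fun v => (df_reverse a b v).symm) n u
  exact hiter ▸ (h n).reverse

lemma cf1_cons_cons_of_ne {c d k : ℕ} {t l : List ℕ} (hb : 1 ≤ b) (hu : Cf1 a b (c :: t))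
    (hk : exps (c :: t) = k :: l) (hd : d = a ∨ d = b) (hdc : d ≠ c)
    (hkab : l ≠ [] → k = a ∨ k = b) : Cf1 a b (d :: c :: t) := by
  obtain ⟨hletters, hle, hinner⟩ := hu
  rw [hk] at hle hinner
  refine ⟨?_, ?_, ?_⟩
  · simpa [hd] using hletters
  · simpa [exps_cons_cons_of_ne t hdc, hk, hb] using hle
  · rw [exps_cons_cons_of_ne t hdc, hk]
    rcases eq_or_ne l [] with rfl | hl
    · simp
    · simpa [List.dropLast_cons_of_ne_nil hl, hkab hl] using hinner

lemma cf1_cons_cons_self {c k : ℕ} {t l : List ℕ} (hu : Cf1 a b (c :: t))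
    (hk : exps (c :: t) = k :: l) (hkb : k < b) : Cf1 a b (c :: c :: t) := by
  obtain ⟨hletters, hle, hinner⟩ := hu
  rw [hk] at hle hinner
  refine ⟨by simpa using hletters, ?_, ?_⟩
  · rw [exps_cons_cons_self hk]
    exact List.forall_mem_cons.2 ⟨hkb, (List.forall_mem_cons.1 hle).2⟩
  · simpa [exps_cons_cons_self hk] using hinner

lemma df_cons_cons_of_ne {c d k : ℕ} {t l : List ℕ} (ha : 1 ≤ a) (hk : exps (c :: t) = k :: l)
    (hdc : d ≠ c) : Df a b (d :: c :: t) = cutLast a b (k :: l) := by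
  rw [df_of_exps_eq_cons a b (exps_cons_cons_of_ne t hdc), hk, cut_of_le ha, List.nil_append]

lemma df_cons_cons_self {c k : ℕ} {t l : List ℕ} (hk : exps (c :: t) = k :: l) :
    Df a b (c :: c :: t) = cut a b (k + 1) ++ cutLast a b l :=
  df_of_exps_eq_cons a b (exps_cons_cons_self hk)

theorem exists_cons_fSmooth (ha : 1 ≤ a) (hab : a < b) :
    ∀ u : List ℕ, FSmooth a b u → ∃ c, (c = a ∨ c = b) ∧ FSmooth a b (c :: u)
  | [], _ => ⟨a, Or.inl rfl, fSmooth_singleton ha hab⟩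
  | c :: t, hu => by
    obtain ⟨hC, hDu⟩ := fSmooth_iff.1 hu
    obtain ⟨k, l, hk⟩ := List.exists_cons_of_ne_nil (exps_ne_nil c t)
    have hDf := df_of_exps_eq_cons a b hk
    have hc : c = a ∨ c = b := hC.1 c List.mem_cons_self
    have hkb : k ≤ b := hC.2.1 k (hk ▸ List.mem_cons_self)
    obtain ⟨d, hd, hdc⟩ : ∃ d, (d = a ∨ d = b) ∧ d ≠ c := by
      rcases hc with rfl | rfl
      exacts [⟨b, Or.inr rfl, hab.ne'⟩, ⟨a, Or.inl rfl, hab.ne⟩]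
    have prepend_other (hkab : l ≠ [] → k = a ∨ k = b)
        (h : FSmooth a b (cutLast a b (k :: l))) :
        FSmooth a b (d :: c :: t) :=
      fSmooth_iff.2 ⟨cf1_cons_cons_of_ne (by omega) hC hk hd hdc hkab,
        by rwa [df_cons_cons_of_ne ha hk hdc]⟩
    have prepend_self (hkb : k < b) (h : FSmooth a b (cut a b (k + 1) ++ cutLast a b l)) :
        FSmooth a b (c :: c :: t) :=
      fSmooth_iff.2 ⟨cf1_cons_cons_self hC hk hkb, by rwa [df_cons_cons_self hk]⟩
    by_cases hlb : l = [] ∨ k = b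
    · refine ⟨d, hd, prepend_other (fun hl => Or.inr (hlb.resolve_left hl)) ?_⟩
      rw [hDf] at hDu
      rcases eq_or_ne l [] with rfl | hl
      · simpa [cutLast] using hDu
      · rw [hlb.resolve_left hl] at hDu ⊢
        rwa [cut_of_lt hab, List.singleton_append, ← cutLast_cons a b hl] at hDu
    obtain ⟨hl, hkb_ne⟩ := not_or.1 hlb
    by_cases hka : k = a
    · obtain ⟨c', hc', hsm⟩ := exists_cons_fSmooth ha hab _ hDu
      rw [hDf, hka, cut_of_le le_rfl, List.nil_append] at hsm
      rcases hc' with rfl | rfl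
      · exact ⟨d, hd, prepend_other (fun _ => Or.inl hka) (by rwa [cutLast_cons _ _ hl, hka])⟩
      · exact ⟨c, hc, prepend_self (by omega) (by rwa [cut_of_lt (by omega)])⟩
    · exact ⟨c, hc, prepend_self (by omega) (by rwa [cut_succ_of_ne hka, ← hDf])⟩
termination_by u => u.length
decreasing_by exact length_df_lt ha (List.cons_ne_nil c t)

end Smooth

theorem stmt2 (a b : ℕ) (ha : 1 ≤ a) (hab : a < b) (u : List ℕ)
    (hu : FSmooth a b u) :
    (∃ c, (c = a ∨ c = b) ∧ FSmooth a b (c :: u)) ∧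
    (∃ d, (d = a ∨ d = b) ∧ FSmooth a b (u ++ [d])) := by
  refine ⟨exists_cons_fSmooth ha hab u hu, ?_⟩
  obtain ⟨d, hd, hdu⟩ := exists_cons_fSmooth ha hab _ hu.reverse
  refine ⟨d, hd, ?_⟩
  simpa using hdu.reverse

end SmoothWords
end

section
/- No infinite smooth word over a binary alphabet {a,b} is eventually periodic. -/
namespace SmoothWords

lemma flip_ne {a b : ℕ} (hab : a ≠ b) (c : ℕ) : flip a b c ≠ c := by
  unfold flip; split <;> omega

/-- A word that derives is not eventually constant. -/
lemma not_eventually_const {a b : ℕ} (ha : 1 ≤ a) (hab : a < b) {y z : ℕ → ℕ}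
    (h : DerivesTo a b y z) (K : ℕ) :
    ∃ m n, K ≤ m ∧ K ≤ n ∧ y m ≠ y n := by
  obtain ⟨hz, T, hT0, hTs, hblk⟩ := h
  have hz1 : ∀ k, 1 ≤ z k := fun k => by rcases hz k with h | h <;> omega
  have hmono : ∀ k, T k < T (k + 1) := fun k => by
    have := hz1 k; have := hTs k; omega
  have hTk : ∀ k, k ≤ T k := by
    intro k
    induction k with
    | zero => omega
    | succ n ih => have := hmono n; omega
  have hyT : ∀ k, y (T k) = (flip a b)^[k] (y 0) := fun k =>
    hblk k (T k) le_rfl (hmono k)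
  refine ⟨T K, T (K + 1), hTk K, le_trans (by omega) (hTk (K + 1)), ?_⟩
  rw [hyT, hyT, Function.iterate_succ_apply']
  exact (flip_ne (by omega) _).symm

/-- If `x` derives to `y` and `x` is eventually `p`-periodic, then `y` is
eventually `r`-periodic for some `0 < r < p` (assuming `y` itself derives). -/
lemma period_descent {a b : ℕ} (ha : 1 ≤ a) (hab : a < b) {x y z : ℕ → ℕ}
    (hxy : DerivesTo a b x y) (hyz : DerivesTo a b y z)
    {N p : ℕ} (hp : 0 < p) (hper : ∀ n, N ≤ n → x (n + p) = x n) :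
    ∃ r M, 0 < r ∧ r < p ∧ ∀ k, M ≤ k → y (k + r) = y k := by
  obtain ⟨hy, S, hS0, hSs, hblk⟩ := hxy
  have hy1 : ∀ k, 1 ≤ y k := fun k => by rcases hy k with h | h <;> omega
  have hSmono : StrictMono S := strictMono_nat_of_lt_succ (fun k => by
    have := hSs k; have := hy1 k; omega)
  have hSk : ∀ k, k ≤ S k := by
    intro k
    induction k with
    | zero => omega
    | succ n ih => have := hSs n; have := hy1 n; omega
  have hne' : a ≠ b := by omega
  have hxS : ∀ k, x (S k) = (flip a b)^[k] (x 0) := fun k =>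
    hblk k (S k) le_rfl (by have := hSs k; have := hy1 k; omega)
  have hxpred : ∀ k, x (S (k + 1) - 1) = (flip a b)^[k] (x 0) := by
    intro k
    have h1 := hSs k; have h2 := hy1 k
    exact hblk k _ (by omega) (by omega)
  have hcover : ∀ n, ∃ k, S k ≤ n ∧ n < S (k + 1) := by
    intro n
    induction n with
    | zero =>
      refine ⟨0, by omega, ?_⟩
      have := hSs 0; have := hy1 0; omega
    | succ n ih =>
      obtain ⟨k, h1, h2⟩ := ih
      by_cases h : n + 1 < S (k + 1)
      · exact ⟨k, by omega, h⟩
      · refine ⟨k + 1, by omega, ?_⟩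
        have := hSs (k + 1); have := hy1 (k + 1); omega
  have hbdry : ∀ n, x n ≠ x (n + 1) → ∃ k, n + 1 = S (k + 1) := by
    intro n hne
    obtain ⟨k, h1, h2⟩ := hcover n
    by_cases h : n + 1 < S (k + 1)
    · exact absurd (by rw [hblk k n h1 h2, hblk k (n + 1) (by omega) h]) hne
    · exact ⟨k, by omega⟩
  set K := N + 1 with hK
  -- Step 1: for k ≥ K, S k + p is again a block boundary.
  have hbd : ∀ k, K ≤ k → ∃ j, k < j ∧ S j = S k + p := by
    intro k hk
    obtain ⟨m, rfl⟩ : ∃ m, k = m + 1 := ⟨k - 1, by omega⟩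
    have hSm := hSs m
    have hym := hy1 m
    have hSge : N + 1 ≤ S (m + 1) := le_trans (by omega) (hSk (m + 1))
    have e1 : x (S (m + 1) + p) = x (S (m + 1)) := hper _ (by omega)
    have e2 : x (S (m + 1) - 1 + p) = x (S (m + 1) - 1) := hper _ (by omega)
    have hne : x (S (m + 1) - 1 + p) ≠ x (S (m + 1) - 1 + p + 1) := by
      have h3 : S (m + 1) - 1 + p + 1 = S (m + 1) + p := by omega
      rw [h3, e1, e2, hxpred m, hxS (m + 1), Function.iterate_succ_apply']
      exact (flip_ne hne' _).symm
    obtain ⟨j, hj⟩ := hbdry _ hne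
    have hlt : S (m + 1) < S (j + 1) := by omega
    exact ⟨j + 1, hSmono.lt_iff_lt.mp hlt, by omega⟩
  -- Step 2: no boundary falls strictly between consecutive shifted boundaries.
  have hgap : ∀ k j, K ≤ k → S k + p < S j → S j < S (k + 1) + p → False := by
    intro k j hk h1 h2
    obtain ⟨m, rfl⟩ : ∃ m, j = m + 1 := by
      refine ⟨j - 1, ?_⟩
      have h0 : S 0 < S j := by omega
      have := hSmono.lt_iff_lt.mp h0; omega
    have hbound : x (S (m + 1)) ≠ x (S (m + 1) - 1) := by
      rw [hxpred m, hxS (m + 1), Function.iterate_succ_apply']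
      exact flip_ne hne' _
    have hkS := hSk k
    set q := S (m + 1) - p with hq
    have hq1 : S k < q := by omega
    have hq2 : q < S (k + 1) := by omega
    have e1 : x (S (m + 1)) = x q := by
      rw [show S (m + 1) = q + p from by omega]
      exact hper q (by omega)
    have e2 : x (S (m + 1) - 1) = x (q - 1) := by
      rw [show S (m + 1) - 1 = q - 1 + p from by omega]
      exact hper (q - 1) (by omega)
    have e3 : x q = x (q - 1) := by
      rw [hblk k q (by omega) hq2, hblk k (q - 1) (by omega) (by omega)]
    exact hbound (by rw [e1, e2, e3])
  -- Get the shift amount r at K and propagate it.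
  obtain ⟨j0, hj0lt, hj0⟩ := hbd K le_rfl
  set r := j0 - K with hrdef
  have hr1 : 1 ≤ r := by omega
  have hbase : S (K + r) = S K + p := by
    rw [show K + r = j0 from by omega]; exact hj0
  have hprop : ∀ d, S (K + d + r) = S (K + d) + p := by
    intro d
    induction d with
    | zero => simpa using hbase
    | succ d ih =>
      obtain ⟨j, hjlt, hj⟩ := hbd (K + d + 1) (by omega)
      rcases lt_trichotomy (S (K + d + 1 + r)) (S (K + d + 1) + p) with h | h | h
      · exfalso
        have hlow : S (K + d) + p < S (K + d + 1 + r) := by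
          have := hSmono (show K + d + r < K + d + 1 + r from by omega)
          omega
        exact hgap (K + d) (K + d + 1 + r) (by omega) hlow h
      · exact h
      · exfalso
        have hst := hSs (K + d)
        have hyst := hy1 (K + d)
        have h1 : S (K + d + r) < S j := by omega
        have h2 : K + d + r < j := hSmono.lt_iff_lt.mp h1
        have h3 : S (K + d + 1 + r) ≤ S j := hSmono.le_iff_le.mpr (by omega)
        omega
  have hyper : ∀ k, K ≤ k → y (k + r) = y k := by
    intro k hk
    have h1 := hprop (k - K)
    have h2 := hprop (k - K + 1)
    rw [show K + (k - K) = k from by omega] at h1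
    rw [show K + (k - K + 1) = k + 1 from by omega] at h2
    have hs1 := hSs (k + r)
    have hs2 := hSs k
    rw [show k + 1 + r = k + r + 1 from by omega] at h2
    omega
  -- r ≤ p with equality forcing y to be eventually constant.
  have hsum : ∀ d, S (K + d) = S K + ∑ j ∈ Finset.range d, y (K + j) := by
    intro d
    induction d with
    | zero => simp
    | succ d ih =>
      have hs := Finset.sum_range_succ (fun j => y (K + j)) d
      have h2 := hSs (K + d)
      rw [show K + (d + 1) = K + d + 1 from by omega, h2, ih, hs]
      omega
  have hsump : ∑ j ∈ Finset.range r, y (K + j) = p := by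
    have := hsum r; omega
  have hrlep : r ≤ p := by
    have h1 : ∑ j ∈ Finset.range r, 1 ≤ ∑ j ∈ Finset.range r, y (K + j) :=
      Finset.sum_le_sum (fun j _ => hy1 (K + j))
    simpa [hsump] using h1
  rcases lt_or_eq_of_le hrlep with hrp | hrp
  · exact ⟨r, K, hr1, hrp, hyper⟩
  · exfalso
    have hone : ∀ j, j < r → y (K + j) = 1 := by
      intro j hj
      by_contra hne2
      have hlt : ∑ i ∈ Finset.range r, 1 < ∑ i ∈ Finset.range r, y (K + i) :=
        Finset.sum_lt_sum (fun i _ => hy1 _)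
          ⟨j, Finset.mem_range.mpr hj, by have := hy1 (K + j); omega⟩
      simp only [Finset.sum_const, Finset.card_range, smul_eq_mul, mul_one] at hlt
      omega
    have hall : ∀ d, y (K + d) = 1 := by
      intro d
      induction d using Nat.strong_induction_on with
      | _ d ih =>
        by_cases hd : d < r
        · exact hone d hd
        · have h1 : y (K + (d - r) + r) = y (K + (d - r)) := hyper _ (by omega)
          rw [show K + (d - r) + r = K + d from by omega] at h1
          rw [h1]
          exact ih (d - r) (by omega)
    obtain ⟨m, n, hm, hn, hmn⟩ := not_eventually_const ha hab hyz K
    have e1 := hall (m - K)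
    have e2 := hall (n - K)
    rw [show K + (m - K) = m from by omega] at e1
    rw [show K + (n - K) = n from by omega] at e2
    exact hmn (by omega)

theorem stmt3 (a b : ℕ) (ha : 1 ≤ a) (hab : a < b) (x : ℕ → ℕ)
    (hx : Smooth a b x) :
    ¬ ∃ N p : ℕ, 0 < p ∧ ∀ n, N ≤ n → x (n + p) = x n := by
  rintro ⟨N, p, hp, hper⟩
  obtain ⟨hxab, X, hX0, hchain⟩ := hx
  have key : ∀ p, 0 < p → ∀ m N, (∀ n, N ≤ n → X m (n + p) = X m n) → False := by
    intro p
    induction p using Nat.strong_induction_on with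
    | _ p ih =>
      intro hp m N hper
      obtain ⟨r, M, hr, hrp, hy⟩ :=
        period_descent ha hab (hchain m) (hchain (m + 1)) hp hper
      exact ih r hrp hr (m + 1) M hy
  exact key p hp 0 N (fun n hn => by rw [hX0]; exact hper n hn)

end SmoothWords
end

section
/- Over the alphabet {a,b} with a < b − 1, the short f-smooth word c^n (c ∈ {a,b}) is: strong bispecial iff n = 0 or n = a; weak bispecial iff n = b − 1; not bispecial iff n = b; and neutral bispecial for all other n in [1, b−1] \ {a, b−1}. -/
namespace SmoothWords

lemma runs_cons_eq (c : ℕ) (t : List ℕ) :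
    runs (c :: t) = match runs t with
      | [] => [(c, 1)]
      | (d, k) :: r => if c = d then (c, k + 1) :: r else (c, 1) :: (d, k) :: r := rfl

lemma runs_cons_head (d : ℕ) (s : List ℕ) : ∃ k r, runs (d :: s) = (d, k) :: r := by
  rw [runs_cons_eq]
  rcases h : runs s with _ | ⟨⟨e, k⟩, r⟩
  · exact ⟨1, [], by simp⟩
  · by_cases hd : d = e
    · exact ⟨k + 1, r, by simp [hd]⟩
    · exact ⟨1, (e, k) :: r, by simp [hd]⟩

lemma runs_replicate_succ (c m : ℕ) : runs (List.replicate (m + 1) c) = [(c, m + 1)] := by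
  induction m with
  | zero => rfl
  | succ k ih => rw [List.replicate_succ, runs_cons_eq, ih]; simp

lemma runs_rep_append (c d : ℕ) (hcd : c ≠ d) (m : ℕ) (t : List ℕ) :
    runs (List.replicate (m + 1) c ++ (d :: t)) = (c, m + 1) :: runs (d :: t) := by
  induction m with
  | zero =>
      obtain ⟨k, r, h⟩ := runs_cons_head d t
      rw [show List.replicate 1 c ++ (d :: t) = c :: d :: t from rfl, runs_cons_eq, h]
      simp [hcd]
  | succ k ih =>
      rw [List.replicate_succ, List.cons_append, runs_cons_eq, ih]
      simp

lemma exps_replicate_succ (c m : ℕ) : exps (List.replicate (m + 1) c) = [m + 1] := by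
  simp [exps, runs_replicate_succ]

lemma exps_two (x y : ℕ) (hxy : x ≠ y) (p q : ℕ) :
    exps (List.replicate (p + 1) x ++ List.replicate (q + 1) y) = [p + 1, q + 1] := by
  nth_rewrite 2 [List.replicate_succ]
  rw [exps, runs_rep_append x y hxy, ← List.replicate_succ, runs_replicate_succ]
  rfl

lemma exps_three (x y : ℕ) (hxy : x ≠ y) (m : ℕ) :
    exps (x :: (List.replicate (m + 1) y ++ [x])) = [1, m + 1, 1] := by
  have h2 : x :: (List.replicate (m + 1) y ++ [x]) =
      List.replicate 1 x ++ (y :: (List.replicate m y ++ [x])) := by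
    simp [List.replicate_succ]
  have h1 : runs (List.replicate (m + 1) y ++ (x :: [])) = (y, m + 1) :: runs [x] :=
    runs_rep_append y x (fun h => hxy h.symm) m []
  rw [List.replicate_succ, List.cons_append] at h1
  rw [exps, h2, runs_rep_append x y hxy, h1]
  rfl

lemma Df_eq_of_exps_nil (u : List ℕ) (h : exps u = []) : Df a b u = [] := by
  unfold Df; rw [h]

lemma Df_eq_of_exps_one (u : List ℕ) (p : ℕ) (h : exps u = [p]) :
    Df a b u = cut a b p := by
  unfold Df; rw [h]

lemma Df_eq_of_exps_two (u : List ℕ) (p q : ℕ) (h : exps u = [p, q]) :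
    Df a b u = cut a b p ++ cut a b q := by
  unfold Df; rw [h]; simp

lemma Df_eq_of_exps_three (u : List ℕ) (p q r : ℕ) (h : exps u = [p, q, r]) :
    Df a b u = cut a b p ++ [q] ++ cut a b r := by
  unfold Df; rw [h]; simp

lemma fsmooth_iff_step (a b : ℕ) (u : List ℕ) :
    FSmooth a b u ↔ Cf1 a b u ∧ FSmooth a b (Df a b u) := by
  constructor
  · intro h
    refine ⟨h 0, fun n => ?_⟩
    have := h (n + 1)
    rwa [Function.iterate_succ_apply] at this
  · rintro ⟨h0, h⟩ n
    cases n with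
    | zero => exact h0
    | succ k => rw [Function.iterate_succ_apply]; exact h k

lemma cf1_nil (a b : ℕ) : Cf1 a b [] := by
  refine ⟨by simp, by simp [exps, runs], by simp [exps, runs]⟩

lemma fsmooth_nil (a b : ℕ) : FSmooth a b [] := by
  intro n
  have : (Df a b)^[n] [] = [] := Function.iterate_fixed (by unfold Df; rfl) n
  rw [this]; exact cf1_nil a b

lemma fsmooth_singleton (a b x : ℕ) (ha : 1 ≤ a) (hb : 1 ≤ b) (hx : x = a ∨ x = b) :
    FSmooth a b [x] := by
  rw [fsmooth_iff_step]
  have he : exps [x] = [1] := exps_replicate_succ x 0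
  constructor
  · refine ⟨by simpa using hx, ?_, ?_⟩
    · rw [he]; intro p hp; simp at hp; omega
    · rw [he]; simp
  · rw [Df_eq_of_exps_one _ 1 he]
    unfold cut; rw [if_pos ha]; exact fsmooth_nil a b

lemma fsmooth_cut (a b p : ℕ) (ha : 1 ≤ a) (hb : 1 ≤ b) : FSmooth a b (cut a b p) := by
  unfold cut; split
  · exact fsmooth_nil a b
  · exact fsmooth_singleton a b b ha hb (Or.inr rfl)

lemma fsmooth_replicate_iff (a b x : ℕ) (ha : 1 ≤ a) (hb : 1 ≤ b) (hx : x = a ∨ x = b)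
    (m : ℕ) : FSmooth a b (List.replicate m x) ↔ m ≤ b := by
  cases m with
  | zero => simpa using fsmooth_nil a b
  | succ k =>
      rw [fsmooth_iff_step]
      constructor
      · rintro ⟨⟨_, h2, _⟩, _⟩
        exact h2 _ (by rw [exps_replicate_succ]; simp)
      · intro hm
        refine ⟨⟨?_, ?_, ?_⟩, ?_⟩
        · intro d hd; rw [List.eq_of_mem_replicate hd]; exact hx
        · rw [exps_replicate_succ]; intro p hp; simp at hp; omega
        · rw [exps_replicate_succ]; simp
        · rw [Df_eq_of_exps_one _ _ (exps_replicate_succ x k)]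
          exact fsmooth_cut a b _ ha hb

lemma fsmooth_two_iff (a b x y : ℕ) (ha : 1 ≤ a) (hab : a + 1 < b)
    (hx : x = a ∨ x = b) (hy : y = a ∨ y = b) (hxy : x ≠ y) (p q : ℕ) :
    FSmooth a b (List.replicate (p + 1) x ++ List.replicate (q + 1) y) ↔
      p + 1 ≤ b ∧ q + 1 ≤ b := by
  have he := exps_two x y hxy p q
  rw [fsmooth_iff_step]
  constructor
  · rintro ⟨⟨_, h2, _⟩, _⟩
    exact ⟨h2 _ (by rw [he]; simp), h2 _ (by rw [he]; simp)⟩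
  · rintro ⟨hp, hq⟩
    refine ⟨⟨?_, ?_, ?_⟩, ?_⟩
    · intro d hd
      rcases List.mem_append.mp hd with h | h <;>
        [rw [List.eq_of_mem_replicate h]; rw [List.eq_of_mem_replicate h]] <;>
        assumption
    · rw [he]; intro r hr; simp at hr; omega
    · rw [he]; simp
    · rw [Df_eq_of_exps_two _ _ _ he]
      unfold cut
      split <;> split <;> simp
      · exact fsmooth_nil a b
      · exact fsmooth_singleton a b b ha (by omega) (Or.inr rfl)
      · exact fsmooth_singleton a b b ha (by omega) (Or.inr rfl)
      · have : [b, b] = List.replicate 2 b := rfl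
        rw [this, fsmooth_replicate_iff a b b ha (by omega) (Or.inr rfl)]; omega

lemma fsmooth_three_iff (a b x y : ℕ) (ha : 1 ≤ a) (hab : a + 1 < b)
    (hx : x = a ∨ x = b) (hy : y = a ∨ y = b) (hxy : x ≠ y) (m : ℕ) :
    FSmooth a b (x :: (List.replicate (m + 1) y ++ [x])) ↔ m + 1 = a ∨ m + 1 = b := by
  have he := exps_three x y hxy m
  rw [fsmooth_iff_step]
  constructor
  · rintro ⟨⟨_, _, h3⟩, _⟩
    exact h3 _ (by rw [he]; simp)
  · intro hm
    refine ⟨⟨?_, ?_, ?_⟩, ?_⟩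
    · intro d hd
      have : d = x ∨ d = y := by
        simp only [List.mem_cons, List.mem_append, List.mem_singleton,
          List.mem_replicate] at hd
        tauto
      rcases this with rfl | rfl <;> assumption
    · rw [he]; intro r hr; simp at hr
      rcases hr with rfl | rfl | rfl <;> rcases hm with h | h <;> omega
    · rw [he]; intro p hp; simp at hp; subst hp; exact hm
    · rw [Df_eq_of_exps_three _ _ _ _ he]
      have hc1 : cut a b 1 = [] := by unfold cut; rw [if_pos ha]
      rw [hc1]
      simp only [List.nil_append, List.append_nil]
      exact fsmooth_singleton a b _ ha (by omega) hm

lemma fsmooth_cons_rep (a b x y : ℕ) (ha : 1 ≤ a) (hab : a + 1 < b)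
    (hx : x = a ∨ x = b) (hy : y = a ∨ y = b) (hxy : x ≠ y) (n : ℕ) (hn : n ≤ b) :
    FSmooth a b (x :: List.replicate n y) := by
  cases n with
  | zero => exact fsmooth_singleton a b x ha (by omega) hx
  | succ k =>
      have e : x :: List.replicate (k + 1) y =
          List.replicate (0 + 1) x ++ List.replicate (k + 1) y := by simp
      rw [e]
      exact (fsmooth_two_iff a b x y ha hab hx hy hxy 0 k).mpr ⟨by omega, by omega⟩

lemma fsmooth_rep_append (a b x y : ℕ) (ha : 1 ≤ a) (hab : a + 1 < b)
    (hx : x = a ∨ x = b) (hy : y = a ∨ y = b) (hxy : x ≠ y) (n : ℕ) (hn : n ≤ b) :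
    FSmooth a b (List.replicate n y ++ [x]) := by
  cases n with
  | zero => simpa using fsmooth_singleton a b x ha (by omega) hx
  | succ k =>
      have e : List.replicate (k + 1) y ++ [x] =
          List.replicate (k + 1) y ++ List.replicate (0 + 1) x := by simp
      rw [e]
      exact (fsmooth_two_iff a b y x ha hab hy hx (fun h => hxy h.symm) k 0).mpr
        ⟨by omega, by omega⟩

lemma assemble (a b n : ℕ) (ha : 1 ≤ a) (hab : a + 1 < b) (hn : n ≤ b) (w : List ℕ)
    (hB : Bispecial a b w ↔ n + 1 ≤ b)
    (hm : n + 1 ≤ b → mult a b w =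
        (if n + 2 ≤ b then (1 : ℤ) else 0) + (if n + 1 ≤ b then 1 else 0) +
        (if n + 1 ≤ b then 1 else 0) + (if n = 0 ∨ n = a ∨ n = b then 1 else 0) - 3) :
    ((Bispecial a b w ∧ mult a b w = 1) ↔ (n = 0 ∨ n = a)) ∧
    ((Bispecial a b w ∧ mult a b w = -1) ↔ n = b - 1) ∧
    (¬ Bispecial a b w ↔ n = b) ∧
    ((1 ≤ n ∧ n ≤ b - 1 ∧ n ≠ a ∧ n ≠ b - 1) →
      Bispecial a b w ∧ mult a b w = 0) := by
  by_cases hb1 : n + 1 ≤ b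
  · have hBisp : Bispecial a b w := hB.mpr hb1
    have hmv := hm hb1
    rw [if_pos hb1] at hmv
    by_cases h2 : n + 2 ≤ b
    · rw [if_pos h2] at hmv
      by_cases h0 : n = 0 ∨ n = a
      · rw [if_pos (by tauto)] at hmv
        norm_num at hmv
        refine ⟨⟨fun _ => h0, fun _ => ⟨hBisp, hmv⟩⟩, ?_, ?_, ?_⟩
        · constructor
          · rintro ⟨_, h⟩; rw [hmv] at h; norm_num at h
          · intro h; exfalso; omega
        · constructor
          · intro h; exact absurd hBisp h
          · intro h; exact absurd h (by omega)
        · rintro ⟨c1, c2, c3, c4⟩; exfalso; rcases h0 with h | h <;> omega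
      · rw [if_neg (by simp only [not_or] at h0 ⊢; exact ⟨h0.1, h0.2, by omega⟩)] at hmv
        norm_num at hmv
        refine ⟨?_, ?_, ?_, fun _ => ⟨hBisp, hmv⟩⟩
        · constructor
          · rintro ⟨_, h⟩; rw [hmv] at h; norm_num at h
          · intro h; exact absurd h h0
        · constructor
          · rintro ⟨_, h⟩; rw [hmv] at h; norm_num at h
          · intro h; exfalso; omega
        · constructor
          · intro h; exact absurd hBisp h
          · intro h; exact absurd h (by omega)
    · rw [if_neg h2, if_neg (by
        simp only [not_or]
        refine ⟨by omega, by omega, by omega⟩)] at hmv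
      norm_num at hmv
      refine ⟨?_, ⟨fun _ => by omega, fun _ => ⟨hBisp, hmv⟩⟩, ?_, ?_⟩
      · constructor
        · rintro ⟨_, h⟩; rw [hmv] at h; norm_num at h
        · intro h; exfalso; rcases h with h | h <;> omega
      · constructor
        · intro h; exact absurd hBisp h
        · intro h; exact absurd h (by omega)
      · rintro ⟨c1, c2, c3, c4⟩; exfalso; omega
  · have hnB : ¬ Bispecial a b w := fun h => absurd (hB.mp h) hb1
    refine ⟨?_, ?_, ⟨fun _ => by omega, fun _ => hnB⟩, ?_⟩
    · constructor
      · rintro ⟨h, _⟩; exact absurd h hnB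
      · intro h; exfalso; rcases h with h | h <;> omega
    · constructor
      · rintro ⟨h, _⟩; exact absurd h hnB
      · intro h; exfalso; omega
    · rintro ⟨c1, c2, c3, c4⟩; exfalso; omega

lemma rep2 (x : ℕ) (n : ℕ) : x :: (List.replicate n x ++ [x]) = List.replicate (n + 2) x := by
  rw [List.replicate_succ, List.replicate_succ']

lemma bisp_a (a b : ℕ) (ha : 1 ≤ a) (hab : a + 1 < b) (n : ℕ) (hn : n ≤ b) :
    Bispecial a b (List.replicate n a) ↔ n + 1 ≤ b := by
  have hb1 : 1 ≤ b := by omega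
  constructor
  · rintro ⟨_, h, _⟩
    exact (fsmooth_replicate_iff a b a ha hb1 (Or.inl rfl) (n + 1)).mp h
  · intro h
    refine ⟨(fsmooth_replicate_iff a b a ha hb1 (Or.inl rfl) n).mpr hn,
      (fsmooth_replicate_iff a b a ha hb1 (Or.inl rfl) (n + 1)).mpr h,
      fsmooth_cons_rep a b b a ha hab (Or.inr rfl) (Or.inl rfl) (by omega) n hn,
      ?_, fsmooth_rep_append a b b a ha hab (Or.inr rfl) (Or.inl rfl) (by omega) n hn⟩
    rw [← List.replicate_succ']
    exact (fsmooth_replicate_iff a b a ha hb1 (Or.inl rfl) (n + 1)).mpr h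

lemma bisp_b (a b : ℕ) (ha : 1 ≤ a) (hab : a + 1 < b) (n : ℕ) (hn : n ≤ b) :
    Bispecial a b (List.replicate n b) ↔ n + 1 ≤ b := by
  have hb1 : 1 ≤ b := by omega
  constructor
  · rintro ⟨_, _, h, _⟩
    exact (fsmooth_replicate_iff a b b ha hb1 (Or.inr rfl) (n + 1)).mp h
  · intro h
    refine ⟨(fsmooth_replicate_iff a b b ha hb1 (Or.inr rfl) n).mpr hn,
      fsmooth_cons_rep a b a b ha hab (Or.inl rfl) (Or.inr rfl) (by omega) n hn,
      (fsmooth_replicate_iff a b b ha hb1 (Or.inr rfl) (n + 1)).mpr h,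
      fsmooth_rep_append a b a b ha hab (Or.inl rfl) (Or.inr rfl) (by omega) n hn, ?_⟩
    rw [← List.replicate_succ']
    exact (fsmooth_replicate_iff a b b ha hb1 (Or.inr rfl) (n + 1)).mpr h

lemma mult_a (a b : ℕ) (ha : 1 ≤ a) (hab : a + 1 < b) (n : ℕ) (hn : n ≤ b) :
    mult a b (List.replicate n a) =
      (if n + 2 ≤ b then (1 : ℤ) else 0) + (if n + 1 ≤ b then 1 else 0) +
      (if n + 1 ≤ b then 1 else 0) + (if n = 0 ∨ n = a ∨ n = b then 1 else 0) - 3 := by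
  have hb1 : 1 ≤ b := by omega
  have h1 : FSmooth a b (a :: (List.replicate n a ++ [a])) ↔ n + 2 ≤ b := by
    rw [rep2]; exact fsmooth_replicate_iff a b a ha hb1 (Or.inl rfl) (n + 2)
  have h2 : FSmooth a b (a :: (List.replicate n a ++ [b])) ↔ n + 1 ≤ b := by
    have e : a :: (List.replicate n a ++ [b]) =
        List.replicate (n + 1) a ++ List.replicate (0 + 1) b := rfl
    rw [e, fsmooth_two_iff a b a b ha hab (Or.inl rfl) (Or.inr rfl) (by omega) n 0]
    exact ⟨fun h => h.1, fun h => ⟨h, by omega⟩⟩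
  have h3 : FSmooth a b (b :: (List.replicate n a ++ [a])) ↔ n + 1 ≤ b := by
    have e : b :: (List.replicate n a ++ [a]) =
        List.replicate (0 + 1) b ++ List.replicate (n + 1) a := by
      simp [List.replicate_succ']
    rw [e, fsmooth_two_iff a b b a ha hab (Or.inr rfl) (Or.inl rfl) (by omega) 0 n]
    exact ⟨fun h => h.2, fun h => ⟨by omega, h⟩⟩
  have h4 : FSmooth a b (b :: (List.replicate n a ++ [b])) ↔ (n = 0 ∨ n = a ∨ n = b) := by
    cases n with
    | zero =>
        have e : b :: (List.replicate 0 a ++ [b]) = List.replicate 2 b := rfl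
        rw [e, fsmooth_replicate_iff a b b ha hb1 (Or.inr rfl) 2]
        exact ⟨fun _ => Or.inl rfl, fun _ => by omega⟩
    | succ k =>
        rw [fsmooth_three_iff a b b a ha hab (Or.inr rfl) (Or.inl rfl) (by omega) k]
        omega
  unfold mult
  by_cases q1 : n + 2 ≤ b <;> by_cases q2 : n + 1 ≤ b <;>
    by_cases q4 : (n = 0 ∨ n = a ∨ n = b) <;>
    simp [h1, h2, h3, h4, q1, q2, q4]

lemma mult_b (a b : ℕ) (ha : 1 ≤ a) (hab : a + 1 < b) (n : ℕ) (hn : n ≤ b) :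
    mult a b (List.replicate n b) =
      (if n + 2 ≤ b then (1 : ℤ) else 0) + (if n + 1 ≤ b then 1 else 0) +
      (if n + 1 ≤ b then 1 else 0) + (if n = 0 ∨ n = a ∨ n = b then 1 else 0) - 3 := by
  have hb1 : 1 ≤ b := by omega
  have h1 : FSmooth a b (a :: (List.replicate n b ++ [a])) ↔ (n = 0 ∨ n = a ∨ n = b) := by
    cases n with
    | zero =>
        have e : a :: (List.replicate 0 b ++ [a]) = List.replicate 2 a := rfl
        rw [e, fsmooth_replicate_iff a b a ha hb1 (Or.inl rfl) 2]
        exact ⟨fun _ => Or.inl rfl, fun _ => by omega⟩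
    | succ k =>
        rw [fsmooth_three_iff a b a b ha hab (Or.inl rfl) (Or.inr rfl) (by omega) k]
        omega
  have h2 : FSmooth a b (a :: (List.replicate n b ++ [b])) ↔ n + 1 ≤ b := by
    have e : a :: (List.replicate n b ++ [b]) =
        List.replicate (0 + 1) a ++ List.replicate (n + 1) b := by
      simp [List.replicate_succ']
    rw [e, fsmooth_two_iff a b a b ha hab (Or.inl rfl) (Or.inr rfl) (by omega) 0 n]
    exact ⟨fun h => h.2, fun h => ⟨by omega, h⟩⟩
  have h3 : FSmooth a b (b :: (List.replicate n b ++ [a])) ↔ n + 1 ≤ b := by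
    have e : b :: (List.replicate n b ++ [a]) =
        List.replicate (n + 1) b ++ List.replicate (0 + 1) a := rfl
    rw [e, fsmooth_two_iff a b b a ha hab (Or.inr rfl) (Or.inl rfl) (by omega) n 0]
    exact ⟨fun h => h.1, fun h => ⟨h, by omega⟩⟩
  have h4 : FSmooth a b (b :: (List.replicate n b ++ [b])) ↔ n + 2 ≤ b := by
    rw [rep2]; exact fsmooth_replicate_iff a b b ha hb1 (Or.inr rfl) (n + 2)
  unfold mult
  by_cases q1 : n + 2 ≤ b <;> by_cases q2 : n + 1 ≤ b <;>
    by_cases q4 : (n = 0 ∨ n = a ∨ n = b) <;>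
    simp [h1, h2, h3, h4, q1, q2, q4]

theorem stmt8 (a b : ℕ) (ha : 1 ≤ a) (hab : a + 1 < b) (c : ℕ) (hc : c = a ∨ c = b)
    (n : ℕ) (hn : n ≤ b) :
    ((Bispecial a b (List.replicate n c) ∧ mult a b (List.replicate n c) = 1) ↔
      (n = 0 ∨ n = a)) ∧
    ((Bispecial a b (List.replicate n c) ∧ mult a b (List.replicate n c) = -1) ↔
      n = b - 1) ∧
    (¬ Bispecial a b (List.replicate n c) ↔ n = b) ∧
    ((1 ≤ n ∧ n ≤ b - 1 ∧ n ≠ a ∧ n ≠ b - 1) →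
      Bispecial a b (List.replicate n c) ∧ mult a b (List.replicate n c) = 0) := by
  rcases hc with h | h <;> rw [h]
  · exact assemble a b n ha hab hn _ (bisp_a a b ha hab n hn)
      (fun _ => mult_a a b ha hab n hn)
  · exact assemble a b n ha hab hn _ (bisp_b a b ha hab n hn)
      (fun _ => mult_b a b ha hab n hn)

end SmoothWords
end

section
/- Let T be the tree of strong bispecial f-smooth words of root ε over {a,b}, with i-th generation T_i (so |T_i| = 2^i), and let f(i) = Σ_{u ∈ T_i} |u| be the total length of generation i. Then f satisfies the recurrence f(i+1) = (a+b)·f(i) + 4a·2^i with f(0) = 0, and consequently f(i) = c·(a+b)^i − c·2^i where c = 4a/(a+b−2). -/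
namespace SmoothWords

/-
The length of `P_{f,c}(u)` is `a|u|_a + b|u|_b + 2a` whatever `c` is, and the two children of a
vertex are complements of each other. Writing `g(i)` for the total weight `∑ (a|u|_a + b|u|_b)`
over `T_i`, the first fact gives `f(i+1) = 2 g(i) + 4a 2^i`, and pairing each word with its
complementary sibling gives `2 g(i) = (a+b) f(i)`, since a letter and its complement weigh `a + b`
together. The closed form is the solution of the resulting first-order linear recurrence.
-/

theorem eq_div_mul_pow_sub_of_succ_eq {f : ℕ → ℝ} {r k : ℝ} (hr : r - 2 ≠ 0) (h0 : f 0 = 0)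
    (hsucc : ∀ i, f (i + 1) = r * f i + k * 2 ^ i) (i : ℕ) :
    f i = k / (r - 2) * r ^ i - k / (r - 2) * 2 ^ i := by
  induction i with
  | zero => simp [h0]
  | succ i ih =>
    rw [hsucc, ih]
    field_simp
    ring

theorem sum_pi_fin_succ_bool {M : Type*} [AddCommMonoid M] (i : ℕ) (F : List Bool → M) :
    ∑ s : Fin (i + 1) → Bool, F (List.ofFn s) =
      ∑ t : Fin i → Bool, (F (false :: List.ofFn t) + F (true :: List.ofFn t)) := by
  rw [← (Fin.consEquiv fun _ : Fin (i + 1) => Bool).sum_comp, Fintype.sum_prod_type_right]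
  simp [List.ofFn_succ, add_comm]

section

variable (a b : ℕ)

theorem flip_eq_or (c : ℕ) : flip a b c = a ∨ flip a b c = b := by
  unfold flip
  split_ifs <;> simp

theorem flip_add_self {x : ℕ} (hx : x = a ∨ x = b) : flip a b x + x = a + b := by
  unfold flip
  split_ifs with h <;> omega

theorem sum_map_flip_add_sum {w : List ℕ} (hw : ∀ x ∈ w, x = a ∨ x = b) :
    (w.map (flip a b)).sum + w.sum = (a + b) * w.length := by
  rw [show (w.map (flip a b)).sum + w.sum = (w.map fun x => flip a b x + x).sum by
    rw [List.sum_map_add, List.map_id'],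
    List.map_congr_left fun x hx => flip_add_self a b (hw x hx), List.map_const', List.sum_replicate,
    smul_eq_mul, mul_comm]

theorem length_pfAux (c : ℕ) (l : List ℕ) : (pfAux a b c l).length = l.sum + a := by
  induction l generalizing c with
  | nil => simp [pfAux]
  | cons p t ih => simp [pfAux, ih]; ring

theorem eq_or_of_mem_pfAux {c : ℕ} (hc : c = a ∨ c = b) {l : List ℕ} {x : ℕ}
    (hx : x ∈ pfAux a b c l) : x = a ∨ x = b := by
  induction l generalizing c with
  | nil => simp_all [pfAux]
  | cons p t ih =>
    simp only [pfAux, List.mem_append, List.mem_replicate] at hx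
    rcases hx with hx | hx
    · exact hx.2 ▸ hc
    · exact ih (flip_eq_or a b c) hx

theorem length_Pf (c : ℕ) (u : List ℕ) : (Pf a b c u).length = u.sum + 2 * a := by
  unfold Pf
  split_ifs <;> simp [length_pfAux] <;> ring

theorem eq_or_of_mem_Pf_a {u : List ℕ} {x : ℕ} (hx : x ∈ Pf a b a u) : x = a ∨ x = b := by
  simp only [Pf, if_true, List.mem_append, List.mem_replicate] at hx
  rcases hx with hx | hx
  · exact Or.inl hx.2
  · exact eq_or_of_mem_pfAux a b (Or.inr rfl) hx

theorem Pf_b_eq_map_flip (u : List ℕ) : Pf a b b u = (Pf a b a u).map (flip a b) := by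
  by_cases hba : b = a
  · subst hba
    conv_lhs => rw [← List.map_id (Pf b b b u)]
    refine List.map_congr_left fun x hx => ?_
    have := eq_or_of_mem_Pf_a b b hx
    simp_all [flip]
  · simp [Pf, hba]

theorem sum_Pf_b_add_sum_Pf_a (u : List ℕ) :
    (Pf a b b u).sum + (Pf a b a u).sum = (a + b) * (u.sum + 2 * a) := by
  rw [Pf_b_eq_map_flip, sum_map_flip_add_sum a b fun x => eq_or_of_mem_Pf_a a b, length_Pf]

/-- Letters are encoded by the naturals `a` and `b`, so `u.sum` is the weight `a|u|_a + b|u|_b`. -/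
def totalWeight (i : ℕ) : ℕ := ∑ s : Fin i → Bool, (node a b (List.ofFn s)).sum

theorem totalLen_succ_eq (i : ℕ) :
    totalLen a b (i + 1) = 2 * totalWeight a b i + 4 * a * 2 ^ i := by
  rw [totalLen, sum_pi_fin_succ_bool i fun w => (node a b w).length, totalWeight, Finset.mul_sum,
    show 4 * a * 2 ^ i = ∑ _ : Fin i → Bool, 4 * a by simp [mul_comm], ← Finset.sum_add_distrib]
  refine Finset.sum_congr rfl fun t _ => ?_
  simp only [node, length_Pf]
  ring

theorem two_mul_totalWeight (i : ℕ) : 2 * totalWeight a b i = (a + b) * totalLen a b i := by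
  cases i with
  | zero => simp [totalWeight, totalLen, node]
  | succ i =>
    rw [totalLen, totalWeight, sum_pi_fin_succ_bool i fun w => (node a b w).length,
      sum_pi_fin_succ_bool i fun w => (node a b w).sum, Finset.mul_sum, Finset.mul_sum]
    refine Finset.sum_congr rfl fun t _ => ?_
    simp only [node, Bool.false_eq_true, if_false, if_true]
    rw [add_comm (List.sum _), sum_Pf_b_add_sum_Pf_a, length_Pf, length_Pf]
    ring

theorem totalLen_succ (i : ℕ) :
    totalLen a b (i + 1) = (a + b) * totalLen a b i + 4 * a * 2 ^ i := by
  rw [totalLen_succ_eq, two_mul_totalWeight]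

end

theorem stmt15 (a b : ℕ) (ha : 1 ≤ a) (hab : a < b) :
    totalLen a b 0 = 0 ∧
    (∀ i, totalLen a b (i + 1) = (a + b) * totalLen a b i + 4 * a * 2 ^ i) ∧
    (∀ i, (totalLen a b i : ℝ) =
      (4 * a / ((a : ℝ) + b - 2)) * ((a : ℝ) + b) ^ i
        - (4 * a / ((a : ℝ) + b - 2)) * 2 ^ i) := by
  have h0 : totalLen a b 0 = 0 := by simp [totalLen, node]
  refine ⟨h0, totalLen_succ a b, eq_div_mul_pow_sub_of_succ_eq ?_ (by exact_mod_cast h0) ?_⟩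
  · have : (3 : ℝ) ≤ a + b := by exact_mod_cast (by omega : 3 ≤ a + b)
    linarith
  · intro i
    rw [totalLen_succ]
    push_cast
    ring

end SmoothWords
end
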